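/- arXiv:2405.11033 — 4 statements merged into one kernel-verified Lean document; each statement's English description precedes it below -/
import Mathlib

section
/- For 0 < s ≤ t and a counting-type pair (N(s), N(t)) with N(s) ≤ N(t), and (X_j) i.i.d. square-integrable and independent of (N(s), N(t)), the covariance of the compound sums satisfies Cov[∑_{j=1}^{N(s)} X_j, ∑_{i=1}^{N(t)} X_i] = Var[X_1]·E[N(s)] + (E[X_1])²·Cov[N(s), N(t)]. -/
/-!
Condition on the indices. Given `(N(s), N(t)) = (m, n)`, the compound sums are the partial sums
`S m`, `S n` of the i.i.d. sequence, and `E[S m * S n] = min m n * Var X + m * n * (E X)²`,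
`E[S m] = m * E X`. Since the indices are independent of the sequence, the joint law is a product
measure, so by Fubini the expectations of the compound sums are obtained by substituting the
random indices into these formulas; finally `min N(s) N(t) = N(s)`.
-/

open MeasureTheory ProbabilityTheory

namespace ProbabilityTheory

open Function

variable {Ω α β : Type*} {mΩ : MeasurableSpace Ω} {mα : MeasurableSpace α}
  {mβ : MeasurableSpace β} {μ : Measure Ω} [IsFiniteMeasure μ] {Y : Ω → α} {Z : Ω → β}

theorem IndepFun.lintegral_eq_lintegral_lintegral (h : IndepFun Y Z μ) (hY : AEMeasurable Y μ)
    (hZ : AEMeasurable Z μ) {F : α → β → ENNReal} (hF : Measurable (uncurry F)) :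
    ∫⁻ ω, F (Y ω) (Z ω) ∂μ = ∫⁻ ω, ∫⁻ ω', F (Y ω) (Z ω') ∂μ ∂μ := by
  calc ∫⁻ ω, F (Y ω) (Z ω) ∂μ = ∫⁻ p, uncurry F p ∂(μ.map fun ω ↦ (Y ω, Z ω)) :=
        (lintegral_map' hF.aemeasurable (hY.prodMk hZ)).symm
    _ = ∫⁻ y, ∫⁻ z, F y z ∂(μ.map Z) ∂(μ.map Y) := by
        rw [h.map_prod_eq_prod_map_map hY hZ, lintegral_prod _ hF.aemeasurable]
        rfl
    _ = ∫⁻ ω, ∫⁻ ω', F (Y ω) (Z ω') ∂μ ∂μ := by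
        have hF' : Measurable fun y ↦ ∫⁻ z, F y z ∂(μ.map Z) := hF.lintegral_prod_right'
        rw [lintegral_map' hF'.aemeasurable hY]
        congr! 2 with ω
        exact lintegral_map' (hF.comp measurable_prodMk_left).aemeasurable hZ

theorem IndepFun.integral_eq_integral_integral {E : Type*} [NormedAddCommGroup E] [NormedSpace ℝ E]
    (h : IndepFun Y Z μ) (hY : AEMeasurable Y μ) (hZ : AEMeasurable Z μ) {F : α → β → E}
    (hF : StronglyMeasurable (uncurry F)) (hFi : Integrable (fun ω ↦ F (Y ω) (Z ω)) μ) :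
    ∫ ω, F (Y ω) (Z ω) ∂μ = ∫ ω, ∫ ω', F (Y ω) (Z ω') ∂μ ∂μ := by
  have hYZ := hY.prodMk hZ
  have hFi' : Integrable (uncurry F) ((μ.map Y).prod (μ.map Z)) := by
    rw [← h.map_prod_eq_prod_map_map hY hZ]
    exact (integrable_map_measure hF.aestronglyMeasurable hYZ).2 hFi
  calc ∫ ω, F (Y ω) (Z ω) ∂μ = ∫ p, uncurry F p ∂(μ.map fun ω ↦ (Y ω, Z ω)) :=
        (integral_map hYZ hF.aestronglyMeasurable).symm
    _ = ∫ y, ∫ z, F y z ∂(μ.map Z) ∂(μ.map Y) := by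
        rw [h.map_prod_eq_prod_map_map hY hZ, integral_prod _ hFi']
        rfl
    _ = ∫ ω, ∫ ω', F (Y ω) (Z ω') ∂μ ∂μ := by
        have hF' : StronglyMeasurable fun y ↦ ∫ z, F y z ∂(μ.map Z) := hF.integral_prod_right'
        rw [integral_map hY hF'.aestronglyMeasurable]
        congr! 2 with ω
        exact integral_map hZ (hF.comp_measurable measurable_prodMk_left).aestronglyMeasurable

end ProbabilityTheory

section PartialSums

open Finset

variable {Ω : Type*} {mΩ : MeasurableSpace Ω} {μ : Measure Ω} {X : ℕ → Ω → ℝ}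

theorem integral_sum_range (hXint : Integrable (X 0) μ)
    (hiid : ∀ j, IdentDistrib (X j) (X 0) μ μ) (m : ℕ) :
    ∫ ω, ∑ i ∈ range m, X i ω ∂μ = m * ∫ ω, X 0 ω ∂μ := by
  rw [integral_finsetSum _ fun i _ ↦ (hiid i).integrable_iff.2 hXint]
  simp [fun i ↦ (hiid i).integral_eq]

theorem integral_mul_eq_of_identDistrib [IsProbabilityMeasure μ] (hXL2 : MemLp (X 0) 2 μ)
    (hiid : ∀ j, IdentDistrib (X j) (X 0) μ μ)
    (hindep : Pairwise fun i j ↦ IndepFun (X i) (X j) μ) (i j : ℕ) :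
    ∫ ω, X i ω * X j ω ∂μ = (∫ ω, X 0 ω ∂μ) ^ 2 + if i = j then variance (X 0) μ else 0 := by
  rcases eq_or_ne i j with rfl | hij
  · have hsq : ∫ ω, X i ω ^ 2 ∂μ = ∫ ω, X 0 ω ^ 2 ∂μ :=
      ((hiid i).comp (measurable_id.pow_const 2)).integral_eq
    rw [if_pos rfl, variance_eq_sub hXL2]
    simp only [← sq, hsq, Pi.pow_apply]
    ring
  · rw [if_neg hij, (hindep hij).integral_fun_mul_eq_mul_integral
      (hiid i).aemeasurable_fst.aestronglyMeasurable (hiid j).aemeasurable_fst.aestronglyMeasurable,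
      (hiid i).integral_eq, (hiid j).integral_eq]
    ring

theorem integral_sum_range_mul_sum_range [IsProbabilityMeasure μ] (hXL2 : MemLp (X 0) 2 μ)
    (hiid : ∀ j, IdentDistrib (X j) (X 0) μ μ)
    (hindep : Pairwise fun i j ↦ IndepFun (X i) (X j) μ) (m n : ℕ) :
    ∫ ω, (∑ i ∈ range m, X i ω) * (∑ j ∈ range n, X j ω) ∂μ
      = (min m n : ℕ) * variance (X 0) μ + m * n * (∫ ω, X 0 ω ∂μ) ^ 2 := by
  have hL2 : ∀ j, MemLp (X j) 2 μ := fun j ↦ (hiid j).memLp_iff.2 hXL2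
  have hint : ∀ i j, Integrable (fun ω ↦ X i ω * X j ω) μ :=
    fun i j ↦ (hL2 i).integrable_mul (hL2 j)
  simp_rw [sum_mul_sum, integral_finsetSum _ fun i _ ↦ integrable_finsetSum _ fun j _ ↦ hint i j,
    fun i ↦ integral_finsetSum (range n) fun j _ ↦ hint i j,
    integral_mul_eq_of_identDistrib hXL2 hiid hindep, sum_add_distrib, sum_ite_eq, sum_ite_mem,
    range_inter_range, sum_const, card_range, nsmul_eq_mul]
  ring

theorem measurable_sum_range_pi : Measurable fun p : ℕ × (ℕ → ℝ) ↦ ∑ i ∈ range p.1, p.2 i :=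
  measurable_from_prod_countable_right fun m ↦
    measurable_sum (range m) fun i _ ↦ measurable_pi_apply i

theorem memLp_two_sum_range_of_indepFun [IsProbabilityMeasure μ] {N : Ω → ℕ}
    (hN : Measurable N) (hNL2 : MemLp (fun ω ↦ (N ω : ℝ)) 2 μ)
    (hNX : IndepFun N (fun ω j ↦ X j ω) μ) (hXL2 : MemLp (X 0) 2 μ)
    (hiid : ∀ j, IdentDistrib (X j) (X 0) μ μ)
    (hindep : Pairwise fun i j ↦ IndepFun (X i) (X j) μ) :
    MemLp (fun ω ↦ ∑ i ∈ range (N ω), X i ω) 2 μ := by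
  have hZ : AEMeasurable (fun ω j ↦ X j ω) μ :=
    aemeasurable_pi_lambda _ fun j ↦ (hiid j).aemeasurable_fst
  have hmeas : AEStronglyMeasurable (fun ω ↦ ∑ i ∈ range (N ω), X i ω) μ :=
    (measurable_sum_range_pi.comp_aemeasurable (hN.aemeasurable.prodMk hZ)).aestronglyMeasurable
  have hsecond : ∀ m : ℕ, ∫⁻ ω, ‖(∑ i ∈ range m, X i ω) ^ 2‖ₑ ∂μ
      = ENNReal.ofReal (m * variance (X 0) μ + m ^ 2 * (∫ ω, X 0 ω ∂μ) ^ 2) := by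
    intro m
    have hSm : MemLp (fun ω ↦ ∑ i ∈ range m, X i ω) 2 μ :=
      memLp_finsetSum _ fun i _ ↦ (hiid i).memLp_iff.2 hXL2
    rw [← ofReal_integral_norm_eq_lintegral_enorm hSm.integrable_sq]
    simp_rw [Real.norm_of_nonneg (sq_nonneg _), sq,
      integral_sum_range_mul_sum_range hXL2 hiid hindep, min_self]
    ring_nf
  have hmoment : Integrable (fun ω ↦ N ω * variance (X 0) μ + N ω ^ 2 * (∫ ω, X 0 ω ∂μ) ^ 2) μ :=
    ((hNL2.integrable one_le_two).mul_const _).add (hNL2.integrable_sq.mul_const _)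
  refine (memLp_two_iff_integrable_sq hmeas).2 ⟨hmeas.pow 2, ?_⟩
  calc ∫⁻ ω, ‖(∑ i ∈ range (N ω), X i ω) ^ 2‖ₑ ∂μ
      = ∫⁻ ω, ∫⁻ ω', ‖(∑ i ∈ range (N ω), X i ω') ^ 2‖ₑ ∂μ ∂μ :=
        hNX.lintegral_eq_lintegral_lintegral hN.aemeasurable hZ
          (F := fun m x ↦ ‖(∑ i ∈ range m, x i) ^ 2‖ₑ) (measurable_sum_range_pi.pow_const 2).enorm
    _ < ⊤ := by simpa only [hsecond] using hmoment.lintegral_lt_top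

theorem integral_sum_range_of_indepFun [IsProbabilityMeasure μ] {N : Ω → ℕ}
    (hN : Measurable N) (hNL2 : MemLp (fun ω ↦ (N ω : ℝ)) 2 μ)
    (hNX : IndepFun N (fun ω j ↦ X j ω) μ) (hXL2 : MemLp (X 0) 2 μ)
    (hiid : ∀ j, IdentDistrib (X j) (X 0) μ μ)
    (hindep : Pairwise fun i j ↦ IndepFun (X i) (X j) μ) :
    ∫ ω, ∑ i ∈ range (N ω), X i ω ∂μ = (∫ ω, (N ω : ℝ) ∂μ) * ∫ ω, X 0 ω ∂μ := by
  have hZ : AEMeasurable (fun ω j ↦ X j ω) μ :=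
    aemeasurable_pi_lambda _ fun j ↦ (hiid j).aemeasurable_fst
  rw [hNX.integral_eq_integral_integral hN.aemeasurable hZ (F := fun m x ↦ ∑ i ∈ range m, x i)
    measurable_sum_range_pi.stronglyMeasurable
    ((memLp_two_sum_range_of_indepFun hN hNL2 hNX hXL2 hiid hindep).integrable one_le_two)]
  simp_rw [integral_sum_range (hXL2.integrable one_le_two) hiid, integral_mul_const]

theorem integral_sum_range_mul_sum_range_of_indepFun [IsProbabilityMeasure μ] {M N : Ω → ℕ}
    (hM : Measurable M) (hN : Measurable N) (hML2 : MemLp (fun ω ↦ (M ω : ℝ)) 2 μ)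
    (hNL2 : MemLp (fun ω ↦ (N ω : ℝ)) 2 μ)
    (hMNX : IndepFun (fun ω ↦ (M ω, N ω)) (fun ω j ↦ X j ω) μ) (hXL2 : MemLp (X 0) 2 μ)
    (hiid : ∀ j, IdentDistrib (X j) (X 0) μ μ)
    (hindep : Pairwise fun i j ↦ IndepFun (X i) (X j) μ) :
    ∫ ω, (∑ i ∈ range (M ω), X i ω) * (∑ j ∈ range (N ω), X j ω) ∂μ
      = ∫ ω, (min (M ω) (N ω) : ℕ) * variance (X 0) μ + M ω * N ω * (∫ ω, X 0 ω ∂μ) ^ 2 ∂μ := by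
  have hZ : AEMeasurable (fun ω j ↦ X j ω) μ :=
    aemeasurable_pi_lambda _ fun j ↦ (hiid j).aemeasurable_fst
  have hMX : IndepFun M (fun ω j ↦ X j ω) μ := hMNX.comp measurable_fst measurable_id
  have hNX : IndepFun N (fun ω j ↦ X j ω) μ := hMNX.comp measurable_snd measurable_id
  have hF : Measurable fun q : (ℕ × ℕ) × (ℕ → ℝ) ↦
      (∑ i ∈ range q.1.1, q.2 i) * ∑ j ∈ range q.1.2, q.2 j :=
    (measurable_sum_range_pi.comp (measurable_fst.fst.prodMk measurable_snd)).mul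
      (measurable_sum_range_pi.comp (measurable_fst.snd.prodMk measurable_snd))
  rw [hMNX.integral_eq_integral_integral (hM.prodMk hN).aemeasurable hZ
    (F := fun p x ↦ (∑ i ∈ range p.1, x i) * ∑ j ∈ range p.2, x j) hF.stronglyMeasurable
    ((memLp_two_sum_range_of_indepFun hM hML2 hMX hXL2 hiid hindep).integrable_mul
      (memLp_two_sum_range_of_indepFun hN hNL2 hNX hXL2 hiid hindep))]
  simp_rw [integral_sum_range_mul_sum_range hXL2 hiid hindep]

end PartialSums

theorem stmt_5_general {Ω : Type*} [MeasureSpace Ω] [IsProbabilityMeasure (ℙ : Measure Ω)]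
    (Ns Nt : Ω → ℕ) (X : ℕ → Ω → ℝ)
    (hNs : Measurable Ns) (hNt : Measurable Nt)
    (hle : ∀ᵐ ω ∂(ℙ : Measure Ω), Ns ω ≤ Nt ω)
    (hNsL2 : MemLp (fun ω => (Ns ω : ℝ)) 2 (ℙ : Measure Ω))
    (hNtL2 : MemLp (fun ω => (Nt ω : ℝ)) 2 (ℙ : Measure Ω))
    (hXL2 : MemLp (X 0) 2 (ℙ : Measure Ω))
    (hiid : ∀ j, IdentDistrib (X j) (X 0) (ℙ : Measure Ω) (ℙ : Measure Ω))
    (hindep : iIndepFun X (ℙ : Measure Ω))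
    (hNindep : IndepFun (fun ω => (Ns ω, Nt ω)) (fun ω => fun j => X j ω) (ℙ : Measure Ω))
    (Cs Ct : Ω → ℝ)
    (hCs : ∀ ω, Cs ω = ∑ j ∈ Finset.range (Ns ω), X j ω)
    (hCt : ∀ ω, Ct ω = ∑ i ∈ Finset.range (Nt ω), X i ω) :
    (∫ ω, Cs ω * Ct ω) - (∫ ω, Cs ω) * (∫ ω, Ct ω) =
      variance (X 0) (ℙ : Measure Ω) * (∫ ω, (Ns ω : ℝ))
        + (∫ ω, X 0 ω) ^ 2 *
          ((∫ ω, (Ns ω : ℝ) * (Nt ω : ℝ)) - (∫ ω, (Ns ω : ℝ)) * ∫ ω, (Nt ω : ℝ)) := by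
  simp_rw [hCs, hCt]
  have hpair : Pairwise fun i j ↦ IndepFun (X i) (X j) ℙ := fun i j hij ↦ hindep.indepFun hij
  have hNsX : IndepFun Ns (fun ω j ↦ X j ω) ℙ := hNindep.comp measurable_fst measurable_id
  have hNtX : IndepFun Nt (fun ω j ↦ X j ω) ℙ := hNindep.comp measurable_snd measurable_id
  have hNN : Integrable (fun ω ↦ (Ns ω : ℝ) * Nt ω) ℙ := hNsL2.integrable_mul hNtL2
  have hmin : ∀ᵐ ω ∂ℙ, ((min (Ns ω) (Nt ω) : ℕ) : ℝ) * variance (X 0) ℙ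
      + Ns ω * Nt ω * (∫ ω, X 0 ω) ^ 2
      = Ns ω * variance (X 0) ℙ + Ns ω * Nt ω * (∫ ω, X 0 ω) ^ 2 := by
    filter_upwards [hle] with ω h
    rw [min_eq_left h]
  rw [integral_sum_range_mul_sum_range_of_indepFun hNs hNt hNsL2 hNtL2 hNindep hXL2 hiid hpair,
    integral_congr_ae hmin,
    integral_add ((hNsL2.integrable one_le_two).mul_const _) (hNN.mul_const _),
    integral_mul_const, integral_mul_const,
    integral_sum_range_of_indepFun hNs hNsL2 hNsX hXL2 hiid hpair,
    integral_sum_range_of_indepFun hNt hNtL2 hNtX hXL2 hiid hpair]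
  ring

/-- Covariance of compound sums: for `N(s) ≤ N(t)` and i.i.d. square-integrable `(X j)`
independent of the pair `(N(s), N(t))`,
`Cov[∑_{j=1}^{N(s)} X_j, ∑_{i=1}^{N(t)} X_i] = Var[X_1]·E[N(s)] + (E[X_1])²·Cov[N(s), N(t)]`. -/
theorem stmt_5 {Ω : Type*} [MeasureSpace Ω] [IsProbabilityMeasure (ℙ : Measure Ω)]
    (Ns Nt : Ω → ℕ) (X : ℕ → Ω → ℝ)
    (hNs : Measurable Ns) (hNt : Measurable Nt)
    (hle : ∀ᵐ ω ∂(ℙ : Measure Ω), Ns ω ≤ Nt ω)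
    (hNsL2 : MemLp (fun ω => (Ns ω : ℝ)) 2 (ℙ : Measure Ω))
    (hNtL2 : MemLp (fun ω => (Nt ω : ℝ)) 2 (ℙ : Measure Ω))
    (hX : ∀ j, Measurable (X j))
    (hXL2 : MemLp (X 0) 2 (ℙ : Measure Ω))
    (hiid : ∀ j, IdentDistrib (X j) (X 0) (ℙ : Measure Ω) (ℙ : Measure Ω))
    (hindep : iIndepFun X (ℙ : Measure Ω))
    (hNindep : IndepFun (fun ω => (Ns ω, Nt ω)) (fun ω => fun j => X j ω) (ℙ : Measure Ω))
    (Cs Ct : Ω → ℝ)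
    (hCs : ∀ ω, Cs ω = ∑ j ∈ Finset.range (Ns ω), X j ω)
    (hCt : ∀ ω, Ct ω = ∑ i ∈ Finset.range (Nt ω), X i ω) :
    (∫ ω, Cs ω * Ct ω) - (∫ ω, Cs ω) * (∫ ω, Ct ω) =
      variance (X 0) (ℙ : Measure Ω) * (∫ ω, (Ns ω : ℝ))
        + (∫ ω, X 0 ω) ^ 2 *
          ((∫ ω, (Ns ω : ℝ) * (Nt ω : ℝ)) - (∫ ω, (Ns ω : ℝ)) * ∫ ω, (Nt ω : ℝ)) :=
  stmt_5_general Ns Nt X hNs hNt hle hNsL2 hNtL2 hXL2 hiid hindep hNindep Cs Ct hCs hCt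
end

section
/- Let N be ℕ-valued with pgf G_N(u) = E_{β,1}(∑_{i=1}^k λ_i(u^i − 1)t^β), and X_1, X_2, ... i.i.d. ℕ-valued with pmf Pr{X_1 = j} = β_j and pgf G_X(u), independent of N. Then the pgf of Q = ∑_{j=1}^N X_j is G_Q(u) = E_{β,1}(t^β ∑_{i=1}^k λ_i ∑_{j=0}^∞ β_j^{*i}(u^j − 1)), where β_j^{*i} = ∑_{l_1+...+l_i = j} β_{l_1}···β_{l_i} is the i-fold convolution. -/
/-!
Since `N` is independent of the sequence `X`, one may integrate over `X` first, and for a fixed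
number `n` of summands independence and identical distribution give
`E[u^(X_0+⋯+X_{n-1})] = G_X(u)^n`.
Hence `G_Q(u) = G_N(G_X(u))`, and `|G_X(u)| ≤ 1` allows the given formula for `G_N` to be used at
`G_X(u)`. Finally `G_X(u)^i - 1 = ∑_j β_j^{*i} (u^j - 1)`: by the Cauchy product the `i`-fold
convolution has generating function `G_X(u)^i`, and its total mass is `G_X(1)^i = 1`.
-/

open MeasureTheory ProbabilityTheory Real

/-- The Mittag-Leffler function `E_{β,1}(z) = ∑_{n≥0} z^n/Γ(βn+1)`. -/
noncomputable def mittagLeffler (β z : ℝ) : ℝ := ∑' n : ℕ, z ^ n / Real.Gamma (β * n + 1)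

/-- `convPow b i j` is the `i`-fold convolution `b_j^{*i}` of the pmf `b` on `ℕ`. -/
def convPow (b : ℕ → ℝ) : ℕ → ℕ → ℝ
  | 0, n => if n = 0 then 1 else 0
  | i + 1, n => ∑ l ∈ Finset.range (n + 1), b l * convPow b i (n - l)

section Convolution

lemma convPow_mul_pow (b : ℕ → ℝ) (u : ℝ) :
    ∀ i j, convPow b i j * u ^ j = convPow (fun l => b l * u ^ l) i j
  | 0, j => by by_cases hj : j = 0 <;> simp [convPow, hj]
  | i + 1, n => by
      rw [convPow, convPow, Finset.sum_mul]
      refine Finset.sum_congr rfl fun l hl => ?_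
      rw [← convPow_mul_pow b u i (n - l)]
      have hln : l + (n - l) = n :=
        Nat.add_sub_cancel' (Nat.lt_succ_iff.mp (Finset.mem_range.mp hl))
      rw [← hln, pow_add, hln]
      ring

lemma summable_norm_convPow {c : ℕ → ℝ} (hc : Summable fun j => ‖c j‖) :
    ∀ i, Summable fun j => ‖convPow c i j‖
  | 0 => by
      refine summable_of_ne_finset_zero (s := {0}) fun j hj => ?_
      simp [convPow, Finset.notMem_singleton.mp hj]
  | i + 1 => by
      simpa only [convPow] using
        summable_norm_sum_mul_range_of_summable_norm hc (summable_norm_convPow hc i)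

lemma hasSum_convPow {c : ℕ → ℝ} (hc : Summable fun j => ‖c j‖) :
    ∀ i, HasSum (convPow c i) ((∑' j, c j) ^ i)
  | 0 => by simpa [convPow] using hasSum_ite_eq (0 : ℕ) (1 : ℝ)
  | i + 1 => by
      have hsum := (summable_norm_convPow hc (i + 1)).of_norm
      rw [hsum.hasSum_iff, pow_succ', (hasSum_convPow hc i).tsum_eq.symm,
        tsum_mul_tsum_eq_tsum_sum_range_of_summable_norm hc (summable_norm_convPow hc i)]
      rfl

lemma hasSum_convPow_mul_pow {b : ℕ → ℝ} (hb : Summable fun j => ‖b j‖) {u : ℝ} (hu : |u| ≤ 1)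
    (i : ℕ) : HasSum (fun j => convPow b i j * u ^ j) ((∑' j, b j * u ^ j) ^ i) := by
  have hbu : Summable fun j => ‖b j * u ^ j‖ := by
    refine hb.of_nonneg_of_le (fun _ => norm_nonneg _) fun j => ?_
    rw [norm_mul, norm_pow, Real.norm_eq_abs u]
    exact mul_le_of_le_one_right (norm_nonneg _) (pow_le_one₀ (abs_nonneg u) hu)
  simpa only [convPow_mul_pow] using hasSum_convPow hbu i

lemma tsum_convPow_mul_pow_sub_one {b : ℕ → ℝ} (hb : Summable fun j => ‖b j‖) {u : ℝ}
    (hu : |u| ≤ 1) (i : ℕ) :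
    ∑' j, convPow b i j * (u ^ j - 1) = (∑' j, b j * u ^ j) ^ i - (∑' j, b j) ^ i := by
  have h1 := hasSum_convPow_mul_pow hb (u := 1) (by norm_num) i
  simp only [one_pow, mul_one] at h1
  simpa only [mul_sub, mul_one] using ((hasSum_convPow_mul_pow hb hu i).sub h1).tsum_eq

end Convolution

section Probability

variable {Ω : Type*} [MeasurableSpace Ω] {μ : Measure Ω}

lemma hasSum_measureReal_fiber [IsProbabilityMeasure μ] {α : Type*} [MeasurableSpace α]
    [Countable α] [MeasurableSingletonClass α] {Y : Ω → α} (hY : Measurable Y) :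
    HasSum (fun a => μ.real {ω | Y ω = a}) 1 := by
  have := Measure.isProbabilityMeasure_map (μ := μ) hY.aemeasurable
  set p := (μ.map Y).toPMF
  have hp : ∀ a, (p a).toReal = μ.real {ω | Y ω = a} := fun a => by
    rw [Measure.toPMF_apply, Measure.map_apply hY (measurableSet_singleton a)]
    rfl
  have h := ENNReal.hasSum_toReal (p.tsum_coe.symm ▸ ENNReal.one_ne_top)
  rw [← ENNReal.tsum_toReal_eq p.apply_ne_top, p.tsum_coe, ENNReal.toReal_one] at h
  simpa only [hp] using h

lemma integral_comp_eq_tsum {E : Type*} [NormedAddCommGroup E] [NormedSpace ℝ E]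
    [CompleteSpace E] {α : Type*} [MeasurableSpace α] [Countable α] [MeasurableSingletonClass α]
    {Y : Ω → α} (hY : Measurable Y) {f : α → E} (hf : Integrable f (μ.map Y)) :
    ∫ ω, f (Y ω) ∂μ = ∑' a, μ.real {ω | Y ω = a} • f a := by
  rw [← integral_map hY.aemeasurable hf.aestronglyMeasurable, integral_countable hf]
  congr! 3 with a
  rw [measureReal_def, Measure.map_apply hY (measurableSet_singleton a)]
  rfl

lemma integrable_pow_comp [IsFiniteMeasure μ] {u : ℝ} (hu : |u| ≤ 1) {Y : Ω → ℕ}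
    (hY : Measurable Y) : Integrable (fun ω => u ^ Y ω) μ :=
  .of_bound ((measurable_of_countable (u ^ ·)).comp hY).aestronglyMeasurable 1
    (ae_of_all _ fun ω => by
      rw [norm_pow, Real.norm_eq_abs]
      exact pow_le_one₀ (abs_nonneg u) hu)

lemma abs_integral_pow_comp_le_one [IsProbabilityMeasure μ] {u : ℝ} (hu : |u| ≤ 1)
    {Y : Ω → ℕ} : |∫ ω, u ^ Y ω ∂μ| ≤ 1 := by
  simpa using norm_integral_le_of_norm_le_const (μ := μ) (f := fun ω => u ^ Y ω) (C := 1)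
    (ae_of_all _ fun ω => by
      rw [norm_pow, Real.norm_eq_abs]
      exact pow_le_one₀ (abs_nonneg u) hu)

lemma integral_pow_sum_range {X : ℕ → Ω → ℕ} (hX : ∀ j, Measurable (X j))
    (hindep : iIndepFun X μ) (hiid : ∀ j, IdentDistrib (X j) (X 0) μ μ) (u : ℝ) :
    ∀ n, ∫ ω, u ^ (∑ j ∈ Finset.range n, X j ω) ∂μ = (∫ ω, u ^ X 0 ω ∂μ) ^ n
  | 0 => by simp [hindep.isProbabilityMeasure]
  | n + 1 => by
      have hpow : Measurable fun m : ℕ => u ^ m := measurable_of_countable _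
      have hind : IndepFun (fun ω => u ^ (∑ j ∈ Finset.range n, X j ω))
          (fun ω => u ^ X n ω) μ := by
        simpa [Function.comp_def, Finset.sum_apply] using
          (hindep.indepFun_finsetSum_of_notMem hX Finset.notMem_range_self).comp hpow hpow
      calc ∫ ω, u ^ (∑ j ∈ Finset.range (n + 1), X j ω) ∂μ
          = ∫ ω, u ^ (∑ j ∈ Finset.range n, X j ω) * u ^ X n ω ∂μ := by
            simp only [Finset.sum_range_succ, pow_add]
        _ = (∫ ω, u ^ X 0 ω ∂μ) ^ n * ∫ ω, u ^ X 0 ω ∂μ := by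
            have hXn : ∫ ω, u ^ X n ω ∂μ = ∫ ω, u ^ X 0 ω ∂μ :=
              ((hiid n).comp hpow).integral_eq
            rw [← integral_pow_sum_range hX hindep hiid u n, ← hXn]
            exact hind.integral_mul_eq_mul_integral
              (hpow.comp (Finset.measurable_fun_sum _ fun j _ => hX j)).aestronglyMeasurable
              (hpow.comp (hX n)).aestronglyMeasurable
        _ = (∫ ω, u ^ X 0 ω ∂μ) ^ (n + 1) := (pow_succ _ n).symm

lemma ProbabilityTheory.IndepFun.integral_comp_eq_integral_integral [IsFiniteMeasure μ]
    {E : Type*} [NormedAddCommGroup E] [NormedSpace ℝ E]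
    {α β : Type*} [MeasurableSpace α] [MeasurableSpace β] {X : Ω → α} {Y : Ω → β}
    (hXY : IndepFun X Y μ) (hX : AEMeasurable X μ) (hY : AEMeasurable Y μ) {F : α × β → E}
    (hF : Integrable F ((μ.map X).prod (μ.map Y))) :
    ∫ ω, F (X ω, Y ω) ∂μ = ∫ ω, ∫ ω', F (X ω, Y ω') ∂μ ∂μ := by
  have hmap := (indepFun_iff_map_prod_eq_prod_map_map hX hY).mp hXY
  calc ∫ ω, F (X ω, Y ω) ∂μ = ∫ p, F p ∂((μ.map X).prod (μ.map Y)) := by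
        rw [← hmap, integral_map (hX.prodMk hY) (hmap ▸ hF.aestronglyMeasurable)]
    _ = ∫ ω, ∫ b, F (X ω, b) ∂(μ.map Y) ∂μ := by
        rw [integral_prod F hF, integral_map hX hF.integral_prod_left.aestronglyMeasurable]
    _ = ∫ ω, ∫ ω', F (X ω, Y ω') ∂μ ∂μ :=
        integral_congr_ae <| (ae_of_ae_map hX hF.prod_right_ae).mono fun ω h =>
          integral_map hY h.aestronglyMeasurable

end Probability

theorem stmt_12_general {Ω : Type*} [MeasureSpace Ω] [IsProbabilityMeasure (ℙ : Measure Ω)]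
    (β t : ℝ) (k : ℕ) (lam : ℕ → ℝ)
    (N : Ω → ℕ) (X : ℕ → Ω → ℕ) (b : ℕ → ℝ)
    (hN : Measurable N) (hX : ∀ j, Measurable (X j))
    (hiid : ∀ j, IdentDistrib (X j) (X 0) (ℙ : Measure Ω) (ℙ : Measure Ω))
    (hindep : iIndepFun X (ℙ : Measure Ω))
    (hNindep : IndepFun N (fun ω => fun j => X j ω) (ℙ : Measure Ω))
    (hpmf : ∀ j : ℕ, ((ℙ : Measure Ω) {ω | X 0 ω = j}).toReal = b j)
    -- the pgf of `N`
    (hpgfN : ∀ v : ℝ, |v| ≤ 1 → (∫ ω, v ^ (N ω)) =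
      mittagLeffler β (∑ i ∈ Finset.Icc 1 k, lam i * (v ^ i - 1) * t ^ β)) :
    ∀ u : ℝ, |u| ≤ 1 →
      (∫ ω, u ^ (∑ j ∈ Finset.range (N ω), X j ω)) =
        mittagLeffler β
          (t ^ β * ∑ i ∈ Finset.Icc 1 k, lam i * ∑' j : ℕ, convPow b i j * (u ^ j - 1)) := by
  intro u hu
  set G := ∫ ω, u ^ X 0 ω
  have hb : HasSum b 1 := by
    simpa only [measureReal_def, hpmf] using hasSum_measureReal_fiber (μ := ℙ) (hX 0)
  have hb_norm : Summable fun j => ‖b j‖ := hb.summable.norm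
  have hG : G = ∑' j, b j * u ^ j := by
    simpa only [measureReal_def, hpmf, smul_eq_mul] using
      integral_comp_eq_tsum (μ := ℙ) (hX 0) (f := (u ^ ·)) (integrable_pow_comp hu measurable_id)
  have hQ : ∫ ω, u ^ (∑ j ∈ Finset.range (N ω), X j ω) = ∫ ω, G ^ N ω := by
    have hS : Measurable fun p : ℕ × (ℕ → ℕ) => ∑ j ∈ Finset.range p.1, p.2 j :=
      (measurable_from_prod_countable_left
        (f := fun q : (ℕ → ℕ) × ℕ => ∑ j ∈ Finset.range q.2, q.1 j)
        fun n => Finset.measurable_sum (Finset.range n) fun j _ => measurable_pi_apply j).comp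
        measurable_swap
    rw [hNindep.integral_comp_eq_integral_integral hN.aemeasurable
      (measurable_pi_lambda _ hX).aemeasurable (F := fun p => u ^ ∑ j ∈ Finset.range p.1, p.2 j)
      (integrable_pow_comp hu hS)]
    simp only [integral_pow_sum_range hX hindep hiid u, G]
  rw [hQ, hpgfN G (abs_integral_pow_comp_le_one hu), Finset.mul_sum]
  congr 1
  refine Finset.sum_congr rfl fun i _ => ?_
  rw [tsum_convPow_mul_pow_sub_one hb_norm hu, hb.tsum_eq, ← hG, one_pow]
  ring

/-- PGF of the compound process: if `N` has pgf
`G_N(u) = E_{β,1}(∑_{i=1}^k λ_i(u^i − 1)t^β)` and the `X_j` are i.i.d. `ℕ`-valued with pmf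
`Pr{X_1 = j} = β_j`, independent of `N`, then the pgf of `Q = ∑_{j=1}^N X_j` is
`G_Q(u) = E_{β,1}(t^β ∑_{i=1}^k λ_i ∑_{j=0}^∞ β_j^{*i}(u^j − 1))`. -/
theorem stmt_12 {Ω : Type*} [MeasureSpace Ω] [IsProbabilityMeasure (ℙ : Measure Ω)]
    (β t : ℝ) (hβ0 : 0 < β) (hβ1 : β ≤ 1) (ht : 0 < t)
    (k : ℕ) (lam : ℕ → ℝ) (hlam : ∀ i ∈ Finset.Icc 1 k, 0 < lam i)
    (N : Ω → ℕ) (X : ℕ → Ω → ℕ) (b : ℕ → ℝ)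
    (hN : Measurable N) (hX : ∀ j, Measurable (X j))
    (hiid : ∀ j, IdentDistrib (X j) (X 0) (ℙ : Measure Ω) (ℙ : Measure Ω))
    (hindep : iIndepFun X (ℙ : Measure Ω))
    (hNindep : IndepFun N (fun ω => fun j => X j ω) (ℙ : Measure Ω))
    (hpmf : ∀ j : ℕ, ((ℙ : Measure Ω) {ω | X 0 ω = j}).toReal = b j)
    -- the pgf of `N`
    (hpgfN : ∀ v : ℝ, |v| ≤ 1 → (∫ ω, v ^ (N ω)) =
      mittagLeffler β (∑ i ∈ Finset.Icc 1 k, lam i * (v ^ i - 1) * t ^ β)) :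
    ∀ u : ℝ, |u| ≤ 1 →
      (∫ ω, u ^ (∑ j ∈ Finset.range (N ω), X j ω)) =
        mittagLeffler β
          (t ^ β * ∑ i ∈ Finset.Icc 1 k, lam i * ∑' j : ℕ, convPow b i j * (u ^ j - 1)) :=
  stmt_12_general β t k lam N X b hN hX hiid hindep hNindep hpmf hpgfN
end

section
/- For fixed s > 0 and β ∈ (0,1), as t → ∞ the function f(t) = β s^{2β} B(β, β+1) + β t^{2β} B(β, β+1; s/t) − (ts)^β satisfies f(t) = β s^{2β} B(β, β+1) − (β²/(β+1)) s^{β+1} t^{β−1} + O(t^{β−2}), where B(a,b;x) = ∫_0^x u^{a−1}(1−u)^{b−1} du is the incomplete beta function. -/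
open Real Filter Asymptotics

/-- The (incomplete) beta function `B(a, b; x) = ∫_0^x u^{a−1}(1−u)^{b−1} du`. -/
noncomputable def incBeta (a b x : ℝ) : ℝ := ∫ u in (0:ℝ)..x, u ^ (a - 1) * (1 - u) ^ (b - 1)

open intervalIntegral

lemma taylor_bd {β : ℝ} (hβ0 : 0 < β) (hβ1 : β < 1) {x : ℝ} (hx0 : 0 ≤ x) (hx : x ≤ 1/2) :
    |(1 - x) ^ β - (1 - β * x)| ≤ 2 * β * x ^ 2 := by
  set f : ℝ → ℝ := fun u => (1 - u) ^ β + β * u with hf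
  have key : ∀ u ∈ Set.Icc (0:ℝ) x, HasDerivWithinAt f
      (β * (1 - u) ^ (β - 1) * (-1) + β * 1) (Set.Icc 0 x) u := by
    intro u hu
    have h1u : (0:ℝ) < 1 - u := by nlinarith [hu.1, hu.2]
    have d1 : HasDerivAt (fun u : ℝ => (1 - u) ^ β) (β * (1 - u) ^ (β - 1) * (-1)) u :=
      (Real.hasDerivAt_rpow_const (Or.inl h1u.ne')).comp u ((hasDerivAt_id u).const_sub 1)
    exact (d1.add ((hasDerivAt_id u).const_mul β)).hasDerivWithinAt
  have bound : ∀ u ∈ Set.Ico (0:ℝ) x, ‖β * (1 - u) ^ (β - 1) * (-1) + β * 1‖ ≤ 2 * β * x := by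
    intro u hu
    have h1u : (0:ℝ) < 1 - u := by nlinarith [hu.1, hu.2.le]
    have h1 : 1 ≤ (1 - u) ^ (β - 1) :=
      Real.one_le_rpow_of_pos_of_le_one_of_nonpos h1u (by linarith [hu.1]) (by linarith)
    have h2 : (1 - u) ^ (β - 1) ≤ (1 - u) ^ (-1 : ℝ) :=
      Real.rpow_le_rpow_of_exponent_ge h1u (by linarith [hu.1]) (by linarith)
    have h3 : (1 - u) ^ (-1 : ℝ) = (1 - u)⁻¹ := Real.rpow_neg_one _
    have h4 : (1 - u)⁻¹ ≤ 1 + 2 * u := by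
      rw [inv_le_iff_one_le_mul₀ h1u]
      nlinarith [hu.1, hu.2.le]
    rw [Real.norm_eq_abs, abs_of_nonpos (by nlinarith)]
    nlinarith [hu.1, hu.2.le]
  have := norm_image_sub_le_of_norm_deriv_le_segment' key bound x (Set.right_mem_Icc.2 hx0)
  simp only [hf, Real.norm_eq_abs, sub_zero, one_mul, Real.one_rpow, mul_zero] at this
  calc |(1 - x) ^ β - (1 - β * x)| = |(1-x)^β + β*x - (1 + 0)| := by ring_nf
    _ ≤ 2 * β * x * x := this
    _ = 2 * β * x ^ 2 := by ring

lemma incBeta_bd {β : ℝ} (hβ0 : 0 < β) (hβ1 : β < 1) {x : ℝ} (hx0 : 0 < x) (hx : x ≤ 1/2) :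
    |incBeta β (β + 1) x - (x ^ β / β - β * x ^ (β + 1) / (β + 1))| ≤ 2 * β * x ^ (β + 2) := by
  have hβ1' : (-1:ℝ) < β - 1 := by linarith
  have hint1 : IntervalIntegrable (fun u : ℝ => u ^ (β - 1)) MeasureTheory.volume 0 x :=
    intervalIntegral.intervalIntegrable_rpow' hβ1'
  have hioc : Set.uIoc (0:ℝ) x = Set.Ioc 0 x := Set.uIoc_of_le hx0.le
  have hintf : IntervalIntegrable (fun u : ℝ => u ^ (β - 1) * (1 - u) ^ β)
      MeasureTheory.volume 0 x := by
    apply hint1.mono_fun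
    · apply Measurable.aestronglyMeasurable
      fun_prop
    · rw [hioc]
      filter_upwards [MeasureTheory.ae_restrict_mem measurableSet_Ioc] with u hu
      have hu1 : (0:ℝ) ≤ 1 - u := by nlinarith [hu.1, hu.2]
      have h1 : (1 - u) ^ β ≤ 1 := Real.rpow_le_one hu1 (by linarith [hu.1] : (1:ℝ) - u ≤ 1) hβ0.le
      have h0 : (0:ℝ) ≤ (1 - u) ^ β := Real.rpow_nonneg hu1 _
      have h2 : (0:ℝ) ≤ u ^ (β - 1) := Real.rpow_nonneg hu.1.le _
      simp only [Real.norm_eq_abs, abs_of_nonneg (mul_nonneg h2 h0), abs_of_nonneg h2]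
      nlinarith
  have hintid : IntervalIntegrable (fun u : ℝ => u ^ (β - 1) * u) MeasureTheory.volume 0 x :=
    hint1.mul_continuousOn continuousOn_id
  -- the remainder integral
  have hsplit : (∫ u in (0:ℝ)..x, u ^ (β - 1) * ((1 - u) ^ β - (1 - β * u)))
      = incBeta β (β + 1) x - (∫ u in (0:ℝ)..x, u ^ (β - 1))
        + β * ∫ u in (0:ℝ)..x, u ^ (β - 1) * u := by
    have e : ∀ u : ℝ, u ^ (β - 1) * ((1 - u) ^ β - (1 - β * u))
        = u ^ (β - 1) * (1 - u) ^ β - u ^ (β - 1) + β * (u ^ (β - 1) * u) := fun u => by ring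
    simp only [e]
    rw [intervalIntegral.integral_add (hintf.sub hint1) (hintid.const_mul β),
      intervalIntegral.integral_sub hintf hint1, intervalIntegral.integral_const_mul]
    have : incBeta β (β + 1) x = ∫ u in (0:ℝ)..x, u ^ (β - 1) * (1 - u) ^ β := by
      unfold incBeta
      norm_num
    rw [this]
  have hI1 : (∫ u in (0:ℝ)..x, u ^ (β - 1)) = x ^ β / β := by
    rw [integral_rpow (Or.inl hβ1')]
    rw [Real.zero_rpow (by linarith : β - 1 + 1 ≠ 0)]
    ring_nf
  have hI2 : (∫ u in (0:ℝ)..x, u ^ (β - 1) * u) = x ^ (β + 1) / (β + 1) := by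
    have e : ∀ u ∈ Set.uIcc (0:ℝ) x, u ^ (β - 1) * u = u ^ β := by
      intro u hu
      rcases eq_or_lt_of_le ((Set.uIcc_of_le hx0.le ▸ hu).1) with h | h
      · rw [← h, Real.zero_rpow (by linarith), Real.zero_rpow hβ0.ne', zero_mul]
      · nth_rewrite 2 [← Real.rpow_one u]
        rw [← Real.rpow_add h]; ring_nf
    rw [intervalIntegral.integral_congr e, integral_rpow (Or.inl (by linarith)),
      Real.zero_rpow (by linarith : β + 1 ≠ 0)]
    ring_nf
  -- bound the remainder
  have hrem : |∫ u in (0:ℝ)..x, u ^ (β - 1) * ((1 - u) ^ β - (1 - β * u))|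
      ≤ 2 * β * x ^ (β + 1) * |x - 0| := by
    rw [← Real.norm_eq_abs]
    apply intervalIntegral.norm_integral_le_of_norm_le_const
    intro u hu
    rw [hioc] at hu
    have hu1 : (0:ℝ) ≤ u := hu.1.le
    have htb : |(1 - u) ^ β - (1 - β * u)| ≤ 2 * β * u ^ 2 :=
      taylor_bd hβ0 hβ1 hu1 (le_trans hu.2 hx)
    have h2 : (0:ℝ) ≤ u ^ (β - 1) := Real.rpow_nonneg hu1 _
    rw [Real.norm_eq_abs, abs_mul, abs_of_nonneg h2]
    calc u ^ (β - 1) * |(1 - u) ^ β - (1 - β * u)| ≤ u ^ (β - 1) * (2 * β * u ^ 2) :=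
          mul_le_mul_of_nonneg_left htb h2
      _ = 2 * β * u ^ (β + 1) := by
          have h5 : u ^ (β - 1) * u ^ (2:ℕ) = u ^ (β + 1) := by
            rw [← Real.rpow_natCast u 2, ← Real.rpow_add hu.1]; norm_num; ring_nf
          linear_combination 2 * β * h5
      _ ≤ 2 * β * x ^ (β + 1) := by
          have := Real.rpow_le_rpow hu1 hu.2 (by linarith : (0:ℝ) ≤ β + 1)
          nlinarith [this]
  rw [hsplit, hI1, hI2] at hrem
  have hx2 : x ^ (β + 1) * x = x ^ (β + 2) := by
    nth_rewrite 2 [← Real.rpow_one x]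
    rw [← Real.rpow_add hx0]; ring_nf
  rw [sub_zero, abs_of_nonneg hx0.le] at hrem
  have e2 : incBeta β (β + 1) x - (x ^ β / β - β * x ^ (β + 1) / (β + 1))
      = (incBeta β (β + 1) x - x ^ β / β) + β * (x ^ (β + 1) / (β + 1)) := by ring
  rw [e2]
  calc |(incBeta β (β + 1) x - x ^ β / β) + β * (x ^ (β + 1) / (β + 1))|
      ≤ 2 * β * x ^ (β + 1) * x := hrem
    _ = 2 * β * x ^ (β + 2) := by rw [mul_assoc, hx2]


/-- Asymptotics of the covariance expression of the inverse stable subordinator: for fixed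
`s > 0` and `β ∈ (0,1)`, as `t → ∞`,
`β s^{2β} B(β,β+1) + β t^{2β} B(β,β+1; s/t) − (ts)^β
  = β s^{2β} B(β,β+1) − (β²/(β+1)) s^{β+1} t^{β−1} + O(t^{β−2})`. -/
theorem stmt_16 (β s : ℝ) (hβ : β ∈ Set.Ioo (0:ℝ) 1) (hs : 0 < s) :
    (fun t : ℝ =>
        (β * s ^ (2 * β) * incBeta β (β + 1) 1 + β * t ^ (2 * β) * incBeta β (β + 1) (s / t)
            - (t * s) ^ β)
          - (β * s ^ (2 * β) * incBeta β (β + 1) 1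
              - (β ^ 2 / (β + 1)) * s ^ (β + 1) * t ^ (β - 1)))
      =O[atTop] fun t : ℝ => t ^ (β - 2) := by
  obtain ⟨hβ0, hβ1⟩ := hβ
  rw [isBigO_iff]
  refine ⟨2 * β ^ 2 * s ^ (β + 2), ?_⟩
  filter_upwards [eventually_ge_atTop (max 1 (2 * s))] with t ht
  have ht1 : (1:ℝ) ≤ t := le_trans (le_max_left _ _) ht
  have ht0 : (0:ℝ) < t := lt_of_lt_of_le one_pos ht1
  have hts : 2 * s ≤ t := le_trans (le_max_right _ _) ht
  set x := s / t with hxdef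
  have hx0 : 0 < x := div_pos hs ht0
  have hx : x ≤ 1 / 2 := by
    rw [hxdef, div_le_div_iff₀ ht0 two_pos]
    linarith
  have hb := incBeta_bd hβ0 hβ1 hx0 hx
  have htβ : (0:ℝ) < t ^ β := Real.rpow_pos_of_pos ht0 _
  have e2 : t ^ (2 * β) = t ^ β * t ^ β := by rw [← Real.rpow_add ht0]; ring_nf
  have e3 : t ^ (β + 1) = t ^ β * t := by rw [Real.rpow_add ht0, Real.rpow_one]
  have e4 : t ^ (β - 1) = t ^ β / t := by rw [Real.rpow_sub ht0, Real.rpow_one]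
  have e5 : t ^ (β - 2) = t ^ β / (t * t) := by rw [Real.rpow_sub ht0, show (2:ℝ) = ((2:ℕ):ℝ) by norm_num, Real.rpow_natCast, sq]
  have e6 : t ^ (β + 2) = t ^ β * (t * t) := by
    rw [show β + 2 = β + 1 + 1 by ring, Real.rpow_add ht0, Real.rpow_one, e3, mul_assoc]
  have ex1 : x ^ β = s ^ β / t ^ β := Real.div_rpow hs.le ht0.le β
  have ex2 : x ^ (β + 1) = s ^ (β + 1) / t ^ (β + 1) := Real.div_rpow hs.le ht0.le (β + 1)
  have ex3 : x ^ (β + 2) = s ^ (β + 2) / t ^ (β + 2) := Real.div_rpow hs.le ht0.le (β + 2)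
  have emu : (t * s) ^ β = t ^ β * s ^ β := Real.mul_rpow ht0.le hs.le
  have key : (β * s ^ (2 * β) * incBeta β (β + 1) 1 + β * t ^ (2 * β) * incBeta β (β + 1) x
          - (t * s) ^ β)
        - (β * s ^ (2 * β) * incBeta β (β + 1) 1
            - (β ^ 2 / (β + 1)) * s ^ (β + 1) * t ^ (β - 1))
      = β * t ^ (2 * β) * (incBeta β (β + 1) x - (x ^ β / β - β * x ^ (β + 1) / (β + 1))) := by
    rw [emu, ex1, ex2, e2, e3, e4]
    field_simp
    ring
  have hnorm : ‖(t:ℝ) ^ (β - 2)‖ = t ^ (β - 2) := by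
    rw [Real.norm_eq_abs, abs_of_nonneg (Real.rpow_nonneg ht0.le _)]
  rw [key, hnorm, Real.norm_eq_abs, abs_mul,
    abs_of_nonneg (mul_nonneg hβ0.le (Real.rpow_nonneg ht0.le _))]
  calc β * t ^ (2 * β) * |incBeta β (β + 1) x - (x ^ β / β - β * x ^ (β + 1) / (β + 1))|
      ≤ β * t ^ (2 * β) * (2 * β * x ^ (β + 2)) :=
        mul_le_mul_of_nonneg_left hb (mul_nonneg hβ0.le (Real.rpow_nonneg ht0.le _))
    _ = 2 * β ^ 2 * s ^ (β + 2) * t ^ (β - 2) := by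
        rw [ex3, e2, e5, e6]
        field_simp
end

section
/- For β ∈ (0,1), the constant d(β) = 2/Γ(2β+1) − 1/Γ(β+1)² is strictly positive. -/
open Real

lemma aux_beta_id {β : ℝ} (hβ : 0 < β) :
    Real.Gamma (β + 1) ^ 2
      = Real.Gamma (2 * β + 2) * ∫ x in (0:ℝ)..1, x ^ β * (1 - x) ^ β := by
  have hre : 0 < Complex.re ((β : ℂ) + 1) := by simp; linarith
  have h := Complex.Gamma_mul_Gamma_eq_betaIntegral hre hre
  have hbeta : Complex.betaIntegral ((β : ℂ) + 1) ((β : ℂ) + 1)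
      = ((∫ x in (0:ℝ)..1, x ^ β * (1 - x) ^ β : ℝ) : ℂ) := by
    rw [Complex.betaIntegral, ← intervalIntegral.integral_ofReal]
    apply intervalIntegral.integral_congr
    intro x hx
    rw [Set.uIcc_of_le (by norm_num : (0:ℝ) ≤ 1)] at hx
    have hx0 : (0:ℝ) ≤ x := hx.1
    have hx1 : (0:ℝ) ≤ 1 - x := by linarith [hx.2]
    have e1 : ((β : ℂ) + 1) - 1 = ((β : ℝ) : ℂ) := by ring
    simp only [e1]
    rw [← Complex.ofReal_cpow hx0, ← Complex.ofReal_one, ← Complex.ofReal_sub,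
      ← Complex.ofReal_cpow hx1]
    push_cast
    ring
  have h2 : ((β : ℂ) + 1) + ((β : ℂ) + 1) = ((2 * β + 2 : ℝ) : ℂ) := by push_cast; ring
  have h3 : ((β : ℂ) + 1) = ((β + 1 : ℝ) : ℂ) := by push_cast; ring
  rw [hbeta, h2, h3, Complex.Gamma_ofReal, Complex.Gamma_ofReal] at h
  have := h
  rw [← Complex.ofReal_mul, ← Complex.ofReal_mul, Complex.ofReal_inj] at this
  rw [sq, this]

lemma aux_four_rpow {β : ℝ} (hβ0 : 0 < β) (hβ1 : β < 1) : (4:ℝ) ^ β < 1 + 3 * β := by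
  have h := strictConvexOn_exp.2 (Set.mem_univ (0:ℝ)) (Set.mem_univ (Real.log 4))
    (by positivity : (0:ℝ) < Real.log 4).ne (by linarith : 0 < 1 - β) hβ0 (by ring)
  simp only [smul_eq_mul, mul_zero, zero_add, Real.exp_zero,
    Real.exp_log (by norm_num : (0:ℝ) < 4)] at h
  rw [Real.rpow_def_of_pos (by norm_num : (0:ℝ) < 4)]
  calc Real.exp (Real.log 4 * β) = Real.exp (β * Real.log 4) := by ring_nf
    _ < (1 - β) * 1 + β * 4 := h
    _ = 1 + 3 * β := by ring

/-- For `β ∈ (0,1)`, the constant `d(β) = 2/Γ(2β+1) − 1/Γ(β+1)²` is strictly positive. -/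
theorem stmt_18 (β : ℝ) (hβ : β ∈ Set.Ioo (0:ℝ) 1) :
    0 < 2 / Real.Gamma (2 * β + 1) - 1 / Real.Gamma (β + 1) ^ 2 := by
  obtain ⟨hβ0, hβ1⟩ := hβ
  have hA : 0 < Real.Gamma (2 * β + 1) := Real.Gamma_pos_of_pos (by linarith)
  have hB : 0 < Real.Gamma (β + 1) := Real.Gamma_pos_of_pos (by linarith)
  have h4β : (0:ℝ) < (4:ℝ) ^ β := Real.rpow_pos_of_pos (by norm_num) β
  -- the integral lower bound
  have hcont : Continuous fun x : ℝ => x ^ β :=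
    continuous_iff_continuousAt.mpr fun x => Real.continuousAt_rpow_const x β (Or.inr hβ0.le)
  have hg : Continuous fun x : ℝ => x ^ β * (1 - x) ^ β :=
    hcont.mul (hcont.comp (continuous_const.sub continuous_id))
  have hmono : ∀ x ∈ Set.Icc (0:ℝ) 1,
      4 ^ ((1:ℝ) - β) * (x - x ^ 2) ≤ x ^ β * (1 - x) ^ β := by
    intro x hx
    obtain ⟨hx0, hx1⟩ := hx
    have hx1' : (0:ℝ) ≤ 1 - x := by linarith
    set s : ℝ := 4 * (x * (1 - x)) with hs
    have hs0 : 0 ≤ s := by positivity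
    have hs1 : s ≤ 1 := by nlinarith [sq_nonneg (2 * x - 1)]
    have hchord : s ≤ s ^ β := by
      calc s = s ^ (1:ℝ) := (Real.rpow_one s).symm
        _ ≤ s ^ β := Real.rpow_le_rpow_of_exponent_ge' hs0 hs1 hβ0.le hβ1.le
    have hmul : x ^ β * (1 - x) ^ β = (x * (1 - x)) ^ β :=
      (Real.mul_rpow hx0 hx1').symm
    have hsplit : s ^ β = 4 ^ β * (x * (1 - x)) ^ β := Real.mul_rpow (by norm_num) (by positivity)
    have h4 : (4:ℝ) ^ ((1:ℝ) - β) = 4 / 4 ^ β := by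
      rw [Real.rpow_sub (by norm_num), Real.rpow_one]
    rw [hmul, h4]
    rw [div_mul_eq_mul_div, div_le_iff₀ h4β]
    calc 4 * (x - x ^ 2) = s := by ring
      _ ≤ s ^ β := hchord
      _ = (x * (1 - x)) ^ β * 4 ^ β := by rw [hsplit]; ring
  have hint : (4:ℝ) ^ ((1:ℝ) - β) / 6 ≤ ∫ x in (0:ℝ)..1, x ^ β * (1 - x) ^ β := by
    have h1 : (∫ x in (0:ℝ)..1, 4 ^ ((1:ℝ) - β) * (x - x ^ 2)) = 4 ^ ((1:ℝ) - β) / 6 := by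
      rw [intervalIntegral.integral_const_mul]
      have : (∫ x in (0:ℝ)..1, (x - x ^ 2)) = 1 / 6 := by
        rw [intervalIntegral.integral_sub (by apply Continuous.intervalIntegrable; continuity)
          (by apply Continuous.intervalIntegrable; continuity)]
        simp [integral_pow]
        norm_num
      rw [this]; ring
    rw [← h1]
    exact intervalIntegral.integral_mono_on (by norm_num)
      (by apply Continuous.intervalIntegrable; continuity)
      (hg.intervalIntegrable 0 1) hmono
  -- put everything together
  have hid := aux_beta_id hβ0
  have hrec : Real.Gamma (2 * β + 2) = (2 * β + 1) * Real.Gamma (2 * β + 1) := by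
    have := Real.Gamma_add_one (s := 2 * β + 1) (by positivity)
    rw [← this]; ring_nf
  have hC : 0 < Real.Gamma (2 * β + 2) := Real.Gamma_pos_of_pos (by linarith)
  have hstep : Real.Gamma (2 * β + 1) < 2 * Real.Gamma (β + 1) ^ 2 := by
    have h48 : 3 * (4:ℝ) ^ β < 8 * β + 4 := by
      have := aux_four_rpow hβ0 hβ1
      nlinarith
    have hkey : 1 < 2 * (2 * β + 1) * (4 ^ ((1:ℝ) - β) / 6) := by
      rw [Real.rpow_sub (by norm_num), Real.rpow_one]
      have h : 2 * (2 * β + 1) * ((4:ℝ) / 4 ^ β / 6) = (8 * β + 4) / (3 * 4 ^ β) := by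
        field_simp; ring
      rw [h, lt_div_iff₀ (by positivity)]
      nlinarith
    calc Real.Gamma (2 * β + 1)
        = Real.Gamma (2 * β + 1) * 1 := by ring
      _ < Real.Gamma (2 * β + 1) * (2 * (2 * β + 1) * (4 ^ ((1:ℝ) - β) / 6)) := by
          exact mul_lt_mul_of_pos_left hkey hA
      _ ≤ Real.Gamma (2 * β + 1) * (2 * (2 * β + 1)
            * ∫ x in (0:ℝ)..1, x ^ β * (1 - x) ^ β) := by
          apply mul_le_mul_of_nonneg_left _ hA.le
          apply mul_le_mul_of_nonneg_left hint (by linarith)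
      _ = 2 * (Real.Gamma (2 * β + 2) * ∫ x in (0:ℝ)..1, x ^ β * (1 - x) ^ β) := by
          rw [hrec]; ring
      _ = 2 * Real.Gamma (β + 1) ^ 2 := by rw [← hid]
  have hB2 : 0 < Real.Gamma (β + 1) ^ 2 := by positivity
  rw [sub_pos, div_lt_div_iff₀ hB2 hA]
  nlinarith
end
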